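/- (Corollary 2.1, diffusion version of Theorem 2, end-to-end bound.) Let δ ∈ ℝ^{d×m} with Frobenius norm ‖δ‖₂ ≤ Δ, and suppose δWᵀ is symmetric positive semidefinite. Set δ_u = δUᵀe ∈ ℝ^d, Σ_δ = (I_d + (1/m)δWᵀ)^{−1}, and μ_δ = −(1/m)·Σ_δ·δ_u, and let σ₁ ≤ … ≤ σ_d be the eigenvalues of Σ_δ^{−1}. Let φ(x) = (2π)^{−d/2}·exp(−‖x‖²/2) be the standard Gaussian density and q_δ the N(μ_δ, Σ_δ) density. Then the Kullback–Leibler divergence satisfies ∫_{ℝ^d} φ(x)·log(φ(x)/q_δ(x)) dx ≤ ½·[ Σ_{i=1}^d (σ_i − log σ_i) − d + (σ_d/m²)·‖Uᵀe‖₂²·Δ² ]. -/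

import Mathlib

open Matrix
open scoped RealInnerProductSpace

/-- The covariance `Σ_δ = (I_d + (1/m)·δWᵀ)⁻¹`. -/
noncomputable def SigmaDelta (d m : ℕ) (W δ : Matrix (Fin d) (Fin m) ℝ) :
    Matrix (Fin d) (Fin d) ℝ :=
  (1 + (m : ℝ)⁻¹ • (δ * Wᵀ))⁻¹

/-- The shifted input `δ_u = δ Uᵀ e ∈ ℝ^d`. -/
noncomputable def deltaU (d m de : ℕ) (U : Matrix (Fin de) (Fin m) ℝ) (e : Fin de → ℝ)
    (δ : Matrix (Fin d) (Fin m) ℝ) : Fin d → ℝ :=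
  δ.mulVec (Uᵀ.mulVec e)

/-- The mean `μ_δ = −(1/m)·Σ_δ·δ_u ∈ ℝ^d`. -/
noncomputable def muDelta (d m de : ℕ) (W : Matrix (Fin d) (Fin m) ℝ)
    (U : Matrix (Fin de) (Fin m) ℝ) (e : Fin de → ℝ)
    (δ : Matrix (Fin d) (Fin m) ℝ) : EuclideanSpace ℝ (Fin d) :=
  -((m : ℝ)⁻¹ • ((WithLp.equiv 2 _).symm
      ((SigmaDelta d m W δ).mulVec (deltaU d m de U e δ)) : EuclideanSpace ℝ (Fin d)))

/-- The Frobenius norm `‖δ‖₂` of a matrix. -/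
noncomputable def frobNorm (d m : ℕ) (δ : Matrix (Fin d) (Fin m) ℝ) : ℝ :=
  Real.sqrt (∑ i, ∑ j, δ i j ^ 2)

/-- The standard Gaussian density `φ(x) = (2π)^{−d/2}·exp(−‖x‖²/2)` on `ℝ^d`. -/
noncomputable def stdGaussianDensity (d : ℕ) (x : EuclideanSpace ℝ (Fin d)) : ℝ :=
  (2 * Real.pi) ^ (-(d : ℝ) / 2) * Real.exp (-‖x‖ ^ 2 / 2)

/-- The Gaussian density `N(μ,Σ)(x) = (2π)^{−d/2}·(det Σ)^{−1/2}·exp(−½(x−μ)ᵀΣ⁻¹(x−μ))`. -/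
noncomputable def gaussianDensity (d : ℕ) (μ : EuclideanSpace ℝ (Fin d))
    (S : Matrix (Fin d) (Fin d) ℝ) (x : EuclideanSpace ℝ (Fin d)) : ℝ :=
  (2 * Real.pi) ^ (-(d : ℝ) / 2) * S.det ^ (-(1 : ℝ) / 2) *
    Real.exp (-(1 / 2) * ⟪x - μ, ((WithLp.equiv 2 _).symm (S⁻¹.mulVec (x - μ)) :
      EuclideanSpace ℝ (Fin d))⟫)

/-!
The integrand is `φ · ½ (log det Σ_δ + (x - μ_δ)ᵀ Σ_δ⁻¹ (x - μ_δ) - ‖x‖²)`, and `φ` is the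
density of the standard Gaussian measure, whose coordinates have mean `0` and covariance `I`.
Hence the divergence equals `½ (tr Σ_δ⁻¹ - log det Σ_δ⁻¹ - d + μ_δᵀ Σ_δ⁻¹ μ_δ)`, and
`tr - log det` is `∑ (σᵢ - log σᵢ)` by the spectral theorem. For the mean term, `Σ_δ⁻¹ = I + P`
with `P ⪰ 0`, so `μ_δᵀ Σ_δ⁻¹ μ_δ = m⁻² δ_uᵀ Σ_δ δ_u ≤ m⁻² ‖δ_u‖² ≤ m⁻² ‖δ‖₂² ‖Uᵀe‖²` by
Cauchy–Schwarz, and `σ_d ≥ 1`.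
-/

open MeasureTheory ProbabilityTheory

lemma sub_dotProduct_mulVec_sub_eq_sum_inner_single {ι : Type*} [Fintype ι] [DecidableEq ι]
    (A : Matrix ι ι ℝ) (z μ : EuclideanSpace ℝ ι) :
    WithLp.ofLp (z - μ) ⬝ᵥ A *ᵥ WithLp.ofLp (z - μ) =
      ∑ i, ∑ j, A i j * ((⟪EuclideanSpace.single i 1, z⟫ - μ i) *
        (⟪EuclideanSpace.single j 1, z⟫ - μ j)) := by
  simp only [EuclideanSpace.inner_single_left, dotProduct, mulVec, Finset.mul_sum]
  refine Finset.sum_congr rfl fun i _ => Finset.sum_congr rfl fun j _ => ?_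
  simp only [PiLp.sub_apply, Real.ringHom_apply, one_mul]
  ring

namespace ProbabilityTheory

variable {E : Type*} [NormedAddCommGroup E] [InnerProductSpace ℝ E] [FiniteDimensional ℝ E]
  [MeasurableSpace E] [BorelSpace E]

lemma memLp_two_inner_stdGaussian (u : E) : MemLp (fun z => ⟪u, z⟫) 2 (stdGaussian E) :=
  (innerSL ℝ u).comp_memLp' IsGaussian.memLp_two_id

lemma integrable_inner_mul_inner_stdGaussian (u v : E) :
    Integrable (fun z => ⟪u, z⟫ * ⟪v, z⟫) (stdGaussian E) :=
  (memLp_two_inner_stdGaussian u).integrable_mul (memLp_two_inner_stdGaussian v)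

lemma integrable_sub_mul_sub_stdGaussian (u v : E) (a b : ℝ) :
    Integrable (fun z => (⟪u, z⟫ - a) * (⟪v, z⟫ - b)) (stdGaussian E) :=
  ((memLp_two_inner_stdGaussian u).sub (memLp_const a)).integrable_mul
    ((memLp_two_inner_stdGaussian v).sub (memLp_const b))

lemma integral_inner_stdGaussian (u : E) : ∫ z, ⟪u, z⟫ ∂stdGaussian E = 0 :=
  integral_strongDual_stdGaussian (innerSL ℝ u)

lemma integral_inner_mul_inner_stdGaussian (u v : E) :
    ∫ z, ⟪u, z⟫ * ⟪v, z⟫ ∂stdGaussian E = ⟪u, v⟫ := by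
  have h := covarianceBilin_apply (μ := stdGaussian E) IsGaussian.memLp_two_id u v
  simp only [covarianceBilin_stdGaussian, id_eq, integral_id_stdGaussian, sub_zero] at h
  exact h.symm

lemma integral_sub_mul_sub_stdGaussian (u v : E) (a b : ℝ) :
    ∫ z, (⟪u, z⟫ - a) * (⟪v, z⟫ - b) ∂stdGaussian E = ⟪u, v⟫ + a * b := by
  have hu := (memLp_two_inner_stdGaussian u).integrable one_le_two
  have hv := (memLp_two_inner_stdGaussian v).integrable one_le_two
  have huv := integrable_inner_mul_inner_stdGaussian u v
  have hlin : Integrable (fun z => b * ⟪u, z⟫ + a * ⟪v, z⟫) (stdGaussian E) :=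
    (hu.const_mul b).add (hv.const_mul a)
  have hquad : Integrable (fun z => ⟪u, z⟫ * ⟪v, z⟫ - (b * ⟪u, z⟫ + a * ⟪v, z⟫))
      (stdGaussian E) :=
    huv.sub hlin
  calc ∫ z, (⟪u, z⟫ - a) * (⟪v, z⟫ - b) ∂stdGaussian E
      = ∫ z, (⟪u, z⟫ * ⟪v, z⟫ - (b * ⟪u, z⟫ + a * ⟪v, z⟫)) + a * b ∂stdGaussian E := by
        congr 1 with z; ring
    _ = ⟪u, v⟫ + a * b := by
        rw [integral_add hquad (integrable_const _), integral_sub huv hlin,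
          integral_add (hu.const_mul b) (hv.const_mul a), integral_const_mul, integral_const_mul,
          integral_inner_mul_inner_stdGaussian, integral_inner_stdGaussian,
          integral_inner_stdGaussian]
        simp

lemma integral_norm_sq_stdGaussian : ∫ z, ‖z‖ ^ 2 ∂stdGaussian E = Module.finrank ℝ E := by
  let b := stdOrthonormalBasis ℝ E
  have h (z : E) : ‖z‖ ^ 2 = ∑ i, ⟪b i, z⟫ * ⟪b i, z⟫ := by
    simp_rw [← sq, b.sum_sq_inner_right]
  simp_rw [h]
  rw [integral_finsetSum _ fun i _ => integrable_inner_mul_inner_stdGaussian _ _]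
  simp [integral_inner_mul_inner_stdGaussian, b.orthonormal.1]

variable {ι : Type*} [Fintype ι] [DecidableEq ι]

lemma integrable_sub_dotProduct_mulVec_sub_stdGaussian (A : Matrix ι ι ℝ)
    (μ : EuclideanSpace ℝ ι) :
    Integrable (fun z => WithLp.ofLp (z - μ) ⬝ᵥ A *ᵥ WithLp.ofLp (z - μ))
      (stdGaussian (EuclideanSpace ℝ ι)) := by
  simp_rw [sub_dotProduct_mulVec_sub_eq_sum_inner_single]
  exact integrable_finsetSum _ fun i _ => integrable_finsetSum _ fun j _ =>
    (integrable_sub_mul_sub_stdGaussian _ _ _ _).const_mul _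

lemma integral_sub_dotProduct_mulVec_sub_stdGaussian (A : Matrix ι ι ℝ)
    (μ : EuclideanSpace ℝ ι) :
    ∫ z, WithLp.ofLp (z - μ) ⬝ᵥ A *ᵥ WithLp.ofLp (z - μ) ∂stdGaussian (EuclideanSpace ℝ ι) =
      A.trace + WithLp.ofLp μ ⬝ᵥ A *ᵥ WithLp.ofLp μ := by
  have hint (i j : ι) := (integrable_sub_mul_sub_stdGaussian (EuclideanSpace.single i (1 : ℝ))
    (EuclideanSpace.single j 1) (μ i) (μ j)).const_mul (A i j)
  simp_rw [sub_dotProduct_mulVec_sub_eq_sum_inner_single]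
  rw [integral_finsetSum _ fun i _ => integrable_finsetSum _ fun j _ => hint i j]
  simp_rw [integral_finsetSum _ fun j _ => hint _ j, integral_const_mul,
    integral_sub_mul_sub_stdGaussian, EuclideanSpace.inner_single_left]
  simp only [Real.ringHom_apply, PiLp.single_apply, mul_ite, mul_one, mul_zero, mul_add,
    Finset.sum_add_distrib, Finset.sum_ite_eq, Finset.mem_univ, ↓reduceIte, trace, diag_apply,
    dotProduct, mulVec, Finset.mul_sum, add_right_inj]
  exact Finset.sum_congr rfl fun i _ => Finset.sum_congr rfl fun j _ => by ring

end ProbabilityTheory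

section StdGaussianDensity

variable {d : ℕ}

lemma stdGaussianDensity_nonneg (x : EuclideanSpace ℝ (Fin d)) : 0 ≤ stdGaussianDensity d x := by
  unfold stdGaussianDensity; positivity

lemma measurable_stdGaussianDensity : Measurable (stdGaussianDensity d) := by
  unfold stdGaussianDensity; fun_prop

open Complex in
lemma integrable_stdGaussianDensity : Integrable (stdGaussianDensity d) := by
  have h := (GaussianFourier.integrable_cexp_neg_mul_sq_norm_add
    (V := EuclideanSpace ℝ (Fin d)) (b := 1 / 2) (by norm_num) 0 0).re.const_mul
    ((2 * Real.pi) ^ (-(d : ℝ) / 2))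
  refine h.congr (ae_of_all _ fun x => ?_)
  simp only [stdGaussianDensity, zero_mul, add_zero]
  rw [← ofReal_ofNat, ← ofReal_one, ← ofReal_div, ← ofReal_neg, ← ofReal_pow, ← ofReal_mul,
    RCLike.re_to_complex, exp_ofReal_re]
  ring_nf

open Complex in
lemma charFun_withDensity_stdGaussianDensity (t : EuclideanSpace ℝ (Fin d)) :
    charFun (volume.withDensity fun x => ENNReal.ofReal (stdGaussianDensity d x)) t =
      cexp (-‖t‖ ^ 2 / 2) := by
  have hintegrand (x : EuclideanSpace ℝ (Fin d)) :
      stdGaussianDensity d x • cexp (⟪x, t⟫ * I) =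
        ((2 * Real.pi) ^ (-(d : ℝ) / 2) : ℝ) * cexp (-(1 / 2) * ‖x‖ ^ 2 + I * ⟪t, x⟫) := by
    rw [stdGaussianDensity, real_inner_comm, Complex.real_smul, ofReal_mul, mul_assoc,
      ofReal_exp, ← exp_add]
    push_cast
    ring_nf
  have h2π : (Real.pi : ℂ) / (1 / 2) = ((2 * Real.pi : ℝ) : ℂ) := by push_cast; ring
  have hexp : ((-(d : ℝ) / 2 : ℝ) : ℂ) + (d : ℂ) / 2 = 0 := by push_cast; ring
  rw [charFun_apply, integral_withDensity_eq_integral_toReal_smul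
    measurable_stdGaussianDensity.ennreal_ofReal (ae_of_all _ fun _ => ENNReal.ofReal_lt_top)]
  simp_rw [ENNReal.toReal_ofReal (stdGaussianDensity_nonneg _), hintegrand]
  rw [integral_const_mul, GaussianFourier.integral_cexp_neg_mul_sq_norm_add (by norm_num),
    finrank_euclideanSpace, Fintype.card_fin, ofReal_cpow (by positivity), ← mul_assoc, h2π,
    ← cpow_add _ _ (by exact_mod_cast (by positivity : (2 * Real.pi) ≠ 0)), hexp, cpow_zero,
    one_mul, I_sq]
  ring_nf

lemma withDensity_stdGaussianDensity :
    volume.withDensity (fun x => ENNReal.ofReal (stdGaussianDensity d x)) =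
      stdGaussian (EuclideanSpace ℝ (Fin d)) := by
  have :=
    isFiniteMeasure_withDensity_ofReal (integrable_stdGaussianDensity (d := d)).hasFiniteIntegral
  refine Measure.ext_of_charFun (funext fun t => ?_)
  rw [charFun_withDensity_stdGaussianDensity, charFun_stdGaussian]

lemma integral_stdGaussianDensity_mul (f : EuclideanSpace ℝ (Fin d) → ℝ) :
    ∫ x, stdGaussianDensity d x * f x = ∫ x, f x ∂stdGaussian (EuclideanSpace ℝ (Fin d)) := by
  rw [← withDensity_stdGaussianDensity, integral_withDensity_eq_integral_toReal_smul
    measurable_stdGaussianDensity.ennreal_ofReal (ae_of_all _ fun _ => ENNReal.ofReal_lt_top)]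
  simp_rw [ENNReal.toReal_ofReal (stdGaussianDensity_nonneg _), smul_eq_mul]

lemma log_stdGaussianDensity_div_gaussianDensity (μ : EuclideanSpace ℝ (Fin d))
    {S : Matrix (Fin d) (Fin d) ℝ} (hS : S.PosDef) (x : EuclideanSpace ℝ (Fin d)) :
    Real.log (stdGaussianDensity d x / gaussianDensity d μ S x) =
      (Real.log S.det + WithLp.ofLp (x - μ) ⬝ᵥ S⁻¹ *ᵥ WithLp.ofLp (x - μ) - ‖x‖ ^ 2) / 2 := by
  have hdet := hS.det_pos
  have hc : 0 < (2 * Real.pi) ^ (-(d : ℝ) / 2) := by positivity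
  unfold stdGaussianDensity gaussianDensity
  rw [Real.log_div (by positivity) (by positivity), Real.log_mul hc.ne' (Real.exp_pos _).ne',
    Real.log_mul (by positivity) (Real.exp_pos _).ne', Real.log_mul hc.ne' (by positivity),
    Real.log_exp, Real.log_exp, Real.log_rpow hdet, EuclideanSpace.inner_eq_star_dotProduct,
    dotProduct_comm]
  simp only [WithLp.ofLp_sub, star_trivial, WithLp.equiv_symm_apply, sub_dotProduct]
  ring

theorem integral_stdGaussianDensity_mul_log_div_gaussianDensity (μ : EuclideanSpace ℝ (Fin d))
    {S : Matrix (Fin d) (Fin d) ℝ} (hS : S.PosDef) :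
    ∫ x, stdGaussianDensity d x * Real.log (stdGaussianDensity d x / gaussianDensity d μ S x) =
      (S⁻¹.trace + WithLp.ofLp μ ⬝ᵥ S⁻¹ *ᵥ WithLp.ofLp μ - d + Real.log S.det) / 2 := by
  have hquad : Integrable
      (fun x => Real.log S.det + WithLp.ofLp (x - μ) ⬝ᵥ S⁻¹ *ᵥ WithLp.ofLp (x - μ))
      (stdGaussian (EuclideanSpace ℝ (Fin d))) :=
    (integrable_const _).add (integrable_sub_dotProduct_mulVec_sub_stdGaussian _ _)
  have hnorm : Integrable (fun x : EuclideanSpace ℝ (Fin d) => ‖x‖ ^ 2)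
      (stdGaussian (EuclideanSpace ℝ (Fin d))) :=
    IsGaussian.memLp_two_id.integrable_norm_pow two_ne_zero
  simp_rw [integral_stdGaussianDensity_mul, log_stdGaussianDensity_div_gaussianDensity μ hS]
  rw [integral_div, integral_sub hquad hnorm, integral_add (integrable_const _)
      (integrable_sub_dotProduct_mulVec_sub_stdGaussian _ _),
    integral_sub_dotProduct_mulVec_sub_stdGaussian, integral_norm_sq_stdGaussian]
  simp only [integral_const, probReal_univ, smul_eq_mul, one_mul, finrank_euclideanSpace,
    Fintype.card_fin]
  ring

end StdGaussianDensity

namespace Matrix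

lemma mulVec_dotProduct_mulVec_le {m n : Type*} [Fintype m] [Fintype n] (M : Matrix m n ℝ)
    (v : n → ℝ) : (M *ᵥ v) ⬝ᵥ (M *ᵥ v) ≤ (∑ i, ∑ j, M i j ^ 2) * (v ⬝ᵥ v) := by
  rw [Finset.sum_mul]
  refine Finset.sum_le_sum fun i _ => ?_
  simpa [mulVec, dotProduct, sq] using Finset.sum_mul_sq_le_sq_mul_sq Finset.univ (M i) v

variable {n : Type*} [Fintype n] [DecidableEq n]

lemma IsHermitian.trace_sub_log_det {A : Matrix n n ℝ} (hA : A.IsHermitian) (hdet : A.det ≠ 0) :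
    A.trace - Real.log A.det = ∑ i, (hA.eigenvalues i - Real.log (hA.eigenvalues i)) := by
  have hprod : A.det = ∏ i, hA.eigenvalues i := by simpa using hA.det_eq_prod_eigenvalues
  rw [Finset.sum_sub_distrib, hA.trace_eq_sum_eigenvalues, hprod,
    Real.log_prod fun i _ => Finset.prod_ne_zero_iff.mp (hprod ▸ hdet) i (Finset.mem_univ i)]
  simp

lemma IsHermitian.one_le_eigenvalues {A : Matrix n n ℝ} (hA : A.IsHermitian)
    (hA1 : (A - 1).PosSemidef) (i : n) : 1 ≤ hA.eigenvalues i := by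
  set v := WithLp.ofLp (hA.eigenvectorBasis i)
  have hv : v ⬝ᵥ v = 1 := by
    have h := real_inner_self_eq_norm_sq (hA.eigenvectorBasis i)
    rw [hA.eigenvectorBasis.orthonormal.1 i, EuclideanSpace.inner_eq_star_dotProduct] at h
    simpa using h
  have hq : 0 ≤ v ⬝ᵥ (A - 1) *ᵥ v := by simpa using hA1.dotProduct_mulVec_nonneg v
  rw [hA.eigenvalues_eq i]
  simp only [star_trivial, RCLike.re_to_real]
  rw [sub_mulVec, one_mulVec, dotProduct_sub, hv] at hq
  linarith

lemma dotProduct_inv_one_add_mulVec_le {P : Matrix n n ℝ} (hP : P.PosSemidef) (w : n → ℝ) :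
    w ⬝ᵥ (1 + P)⁻¹ *ᵥ w ≤ w ⬝ᵥ w := by
  have hdet : IsUnit (1 + P).det := (PosDef.one.add_posSemidef hP).det_pos.ne'.isUnit
  set y := (1 + P)⁻¹ *ᵥ w
  have hw : (1 + P) *ᵥ y = w := by
    rw [mulVec_mulVec, mul_nonsing_inv _ hdet, one_mulVec]
  rw [add_mulVec, one_mulVec] at hw
  have hyPy : 0 ≤ y ⬝ᵥ P *ᵥ y := by simpa using hP.dotProduct_mulVec_nonneg y
  have hPyPy : 0 ≤ (P *ᵥ y) ⬝ᵥ P *ᵥ y := Finset.sum_nonneg fun i _ => mul_self_nonneg _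
  -- `w ⬝ᵥ y = y ⬝ᵥ y + y ⬝ᵥ P y`, while `w ⬝ᵥ w = y ⬝ᵥ y + 2 y ⬝ᵥ P y + ‖P y‖²`.
  rw [← hw]
  simp only [add_dotProduct, dotProduct_add, dotProduct_comm (P *ᵥ y) y]
  linarith

end Matrix

section
variable {d m de : ℕ} {W δ : Matrix (Fin d) (Fin m) ℝ}

lemma inv_sigmaDelta (hpsd : (δ * Wᵀ).PosSemidef) :
    (SigmaDelta d m W δ)⁻¹ = 1 + (m : ℝ)⁻¹ • (δ * Wᵀ) :=
  nonsing_inv_nonsing_inv _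
    (PosDef.one.add_posSemidef (hpsd.smul (by positivity))).det_pos.ne'.isUnit

lemma posDef_sigmaDelta (hpsd : (δ * Wᵀ).PosSemidef) : (SigmaDelta d m W δ).PosDef :=
  (PosDef.one.add_posSemidef (hpsd.smul (by positivity))).inv

lemma muDelta_dotProduct_mulVec_le (U : Matrix (Fin de) (Fin m) ℝ) (e : Fin de → ℝ)
    (hpsd : (δ * Wᵀ).PosSemidef) :
    WithLp.ofLp (muDelta d m de W U e δ) ⬝ᵥ (SigmaDelta d m W δ)⁻¹ *ᵥ
        WithLp.ofLp (muDelta d m de W U e δ) ≤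
      frobNorm d m δ ^ 2 * ‖(WithLp.equiv 2 _).symm (Uᵀ *ᵥ e)‖ ^ 2 / (m : ℝ) ^ 2 := by
  set P := (m : ℝ)⁻¹ • (δ * Wᵀ)
  set w := deltaU d m de U e δ
  have hP : P.PosSemidef := hpsd.smul (by positivity)
  have hdet : IsUnit (1 + P).det := (PosDef.one.add_posSemidef hP).det_pos.ne'.isUnit
  have hμ : WithLp.ofLp (muDelta d m de W U e δ) = -(m : ℝ)⁻¹ • ((1 + P)⁻¹ *ᵥ w) := by
    simp [muDelta, SigmaDelta, P, w]
  have hquad : WithLp.ofLp (muDelta d m de W U e δ) ⬝ᵥ (SigmaDelta d m W δ)⁻¹ *ᵥ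
      WithLp.ofLp (muDelta d m de W U e δ) = (w ⬝ᵥ (1 + P)⁻¹ *ᵥ w) / (m : ℝ) ^ 2 := by
    rw [hμ, inv_sigmaDelta hpsd, mulVec_smul, mulVec_mulVec, mul_nonsing_inv _ hdet, one_mulVec,
      smul_dotProduct, dotProduct_smul, dotProduct_comm]
    simp only [smul_eq_mul]
    ring
  have hfrob : frobNorm d m δ ^ 2 = ∑ i, ∑ j, δ i j ^ 2 := Real.sq_sqrt (by positivity)
  have hnorm : ‖(WithLp.equiv 2 _).symm (Uᵀ *ᵥ e)‖ ^ 2 = (Uᵀ *ᵥ e) ⬝ᵥ (Uᵀ *ᵥ e) := by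
    rw [WithLp.equiv_symm_apply, EuclideanSpace.real_norm_sq_eq]
    simp [dotProduct, sq]
  rw [hquad, hfrob, hnorm]
  gcongr
  exact (dotProduct_inv_one_add_mulVec_le hP w).trans (mulVec_dotProduct_mulVec_le δ _)
end

theorem corollary_2_1_end_to_end_general (d m de : ℕ)
    (W : Matrix (Fin d) (Fin m) ℝ) (U : Matrix (Fin de) (Fin m) ℝ) (e : Fin de → ℝ)
    (δ : Matrix (Fin d) (Fin m) ℝ) (Δ : ℝ)
    (hδ : frobNorm d m δ ≤ Δ)
    (hpsd : (δ * Wᵀ).PosSemidef)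
    (hH : ((SigmaDelta d m W δ)⁻¹).IsHermitian)
    (σd : ℝ) (hσd : IsGreatest (Set.range hH.eigenvalues) σd) :
    ∫ x : EuclideanSpace ℝ (Fin d),
        stdGaussianDensity d x *
          Real.log (stdGaussianDensity d x /
            gaussianDensity d (muDelta d m de W U e δ) (SigmaDelta d m W δ) x)
      ≤ (1 / 2) * ((∑ i, (hH.eigenvalues i - Real.log (hH.eigenvalues i))) - d +
          (σd / (m : ℝ) ^ 2) *
            ‖((WithLp.equiv 2 _).symm (Uᵀ.mulVec e) : EuclideanSpace ℝ (Fin m))‖ ^ 2 *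
            Δ ^ 2) := by
  have hS := posDef_sigmaDelta (W := W) hpsd
  have hσd_ge : 1 ≤ σd := by
    obtain ⟨i, rfl⟩ := hσd.1
    refine hH.one_le_eigenvalues ?_ i
    simpa [inv_sigmaDelta hpsd] using hpsd.smul (inv_nonneg.mpr (Nat.cast_nonneg' m))
  have hlogdet : Real.log (SigmaDelta d m W δ).det = -Real.log (SigmaDelta d m W δ)⁻¹.det := by
    rw [det_nonsing_inv, Ring.inverse_eq_inv', Real.log_inv, neg_neg]
  have hΔ : frobNorm d m δ ^ 2 ≤ Δ ^ 2 := pow_le_pow_left₀ (Real.sqrt_nonneg _) hδ 2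
  have hmean : WithLp.ofLp (muDelta d m de W U e δ) ⬝ᵥ (SigmaDelta d m W δ)⁻¹ *ᵥ
      WithLp.ofLp (muDelta d m de W U e δ) ≤
        σd / (m : ℝ) ^ 2 * ‖(WithLp.equiv 2 _).symm (Uᵀ *ᵥ e)‖ ^ 2 * Δ ^ 2 :=
    calc _ ≤ frobNorm d m δ ^ 2 * ‖(WithLp.equiv 2 _).symm (Uᵀ *ᵥ e)‖ ^ 2 / (m : ℝ) ^ 2 :=
          muDelta_dotProduct_mulVec_le U e hpsd
      _ ≤ Δ ^ 2 * ‖(WithLp.equiv 2 _).symm (Uᵀ *ᵥ e)‖ ^ 2 / (m : ℝ) ^ 2 := by gcongr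
      _ ≤ σd * (Δ ^ 2 * ‖(WithLp.equiv 2 _).symm (Uᵀ *ᵥ e)‖ ^ 2 / (m : ℝ) ^ 2) :=
          le_mul_of_one_le_left (by positivity) hσd_ge
      _ = _ := by ring
  rw [integral_stdGaussianDensity_mul_log_div_gaussianDensity _ hS, hlogdet,
    ← hH.trace_sub_log_det hS.inv.det_pos.ne']
  linarith

/-- **Corollary 2.1, end-to-end bound.** For `δ` with Frobenius norm
`‖δ‖₂ ≤ Δ` and `δWᵀ` symmetric positive semidefinite, with `σ_1 ≤ … ≤ σ_d` the eigenvalues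
of `Σ_δ⁻¹` (with `σ_d` the largest), the KL divergence between the standard Gaussian `φ`
and the `N(μ_δ, Σ_δ)` density `q_δ` satisfies
`∫ φ(x)·log(φ(x)/q_δ(x)) dx ≤ ½·[Σᵢ (σ_i − log σ_i) − d + (σ_d/m²)·‖Uᵀe‖₂²·Δ²]`. -/
theorem corollary_2_1_end_to_end (d m de : ℕ) (hd : 0 < d) (hm : 0 < m) (hde : 0 < de)
    (W : Matrix (Fin d) (Fin m) ℝ) (U : Matrix (Fin de) (Fin m) ℝ) (e : Fin de → ℝ)
    (δ : Matrix (Fin d) (Fin m) ℝ) (Δ : ℝ)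
    (hδ : frobNorm d m δ ≤ Δ)
    (hpsd : (δ * Wᵀ).PosSemidef)
    (hH : ((SigmaDelta d m W δ)⁻¹).IsHermitian)
    (σd : ℝ) (hσd : IsGreatest (Set.range hH.eigenvalues) σd) :
    ∫ x : EuclideanSpace ℝ (Fin d),
        stdGaussianDensity d x *
          Real.log (stdGaussianDensity d x /
            gaussianDensity d (muDelta d m de W U e δ) (SigmaDelta d m W δ) x)
      ≤ (1 / 2) * ((∑ i, (hH.eigenvalues i - Real.log (hH.eigenvalues i))) - d +
          (σd / (m : ℝ) ^ 2) *
            ‖((WithLp.equiv 2 _).symm (Uᵀ.mulVec e) : EuclideanSpace ℝ (Fin m))‖ ^ 2 *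
            Δ ^ 2) :=
  corollary_2_1_end_to_end_general d m de W U e δ Δ hδ hpsd hH σd hσd
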